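/- Let k be a sink (or a source) of a valued quiver (M, Γ, Ω) of any type. Then the BGP reflection functor R(S^+_k) (resp. R(S^-_k)) gives a one-to-one correspondence from the set of exceptional sets in ind C(Ω) to the set of exceptional sets in ind C(s_kΩ), and under this correspondence tilting sets go to tilting sets. -/
import Mathlib


open CategoryTheory Limits Pretriangulated

/-- A valued quiver `(Γ, d, Ω)`: a finite acyclic valued graph with a symmetrizable
valuation `d` (with symmetrizer `ε`) together with an orientation given by the
relation `arrow`. -/
structure ValuedQuiver (ι : Type) [Fintype ι] [DecidableEq ι] where
  d : ι → ι → ℕ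
  eps : ι → ℕ
  eps_pos : ∀ i, 0 < eps i
  d_diag : ∀ i, d i i = 0
  d_symmetrizable : ∀ i j, d i j * eps j = d j i * eps i
  arrow : ι → ι → Prop
  arrow_edge : ∀ i j, arrow i j → d i j ≠ 0
  arrow_irrefl : ∀ i, ¬ arrow i i
  orient : ∀ i j, i ≠ j → d i j ≠ 0 → (arrow i j ↔ ¬ arrow j i)
  acyclic : (SimpleGraph.fromRel fun i j => d i j ≠ 0).IsAcyclic

/-- The simple root `α_i` in the root lattice `ι → ℤ`. -/
def simpleRoot {ι : Type} [DecidableEq ι] (i : ι) : ι → ℤ := Pi.single i 1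

namespace ValuedQuiver

variable {ι : Type} [Fintype ι] [DecidableEq ι] (Q : ValuedQuiver ι)

/-- A sink: no arrows start at `k`. -/
def IsSink (k : ι) : Prop := ∀ j, ¬ Q.arrow k j

/-- A source: no arrows end at `k`. -/
def IsSource (k : ι) : Prop := ∀ j, ¬ Q.arrow j k

/-- `Q'` is the valued quiver `(Γ, d, s_k Ω)` obtained from `Q` by reversing all
arrows along edges containing `k`. -/
def IsReflectionAt (Q' : ValuedQuiver ι) (k : ι) : Prop :=
  Q'.d = Q.d ∧ Q'.eps = Q.eps ∧
    ∀ i j, Q'.arrow i j ↔ (if i = k ∨ j = k then Q.arrow j i else Q.arrow i j)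

/-- The (generalized) Cartan matrix of the valued graph. -/
def cartan (i j : ι) : ℤ := if i = j then 2 else -(Q.d i j : ℤ)

/-- The simple reflection `s_i` acting on the root lattice `ι → ℤ`
(coordinates in the simple roots). -/
def refl (i : ι) (x : ι → ℤ) : ι → ℤ :=
  Function.update x i (x i - ∑ j, Q.cartan i j * x j)

/-- The (real) roots: Weyl group translates of simple roots. -/
def IsRoot (x : ι → ℤ) : Prop := ∃ (l : List ι) (i : ι), x = l.foldr Q.refl (simpleRoot i)

/-- Positive roots. -/
def IsPositiveRoot (x : ι → ℤ) : Prop := Q.IsRoot x ∧ ∀ i, 0 ≤ x i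

/-- The set `Φ(J)_{≥ -1}` of almost positive roots of the root subsystem supported
on `J`: positive roots supported on `J` together with negatives of simple roots
`-α_j`, `j ∈ J`. -/
def AlmostPositiveOn (J : Finset ι) : Set (ι → ℤ) :=
  {x | Q.IsPositiveRoot x ∧ ∀ i, x i ≠ 0 → i ∈ J} ∪ {x | ∃ i ∈ J, x = -simpleRoot i}

/-- The set `Φ_{≥ -1}` of almost positive roots. -/
def AlmostPositive : Set (ι → ℤ) := Q.AlmostPositiveOn Finset.univ

open scoped Classical in
/-- The truncated simple reflection `σ_k`: it fixes `-α_j` for `j ≠ k` and acts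
as the simple reflection `s_k` otherwise. -/
noncomputable def sigma (k : ι) (x : ι → ℤ) : ι → ℤ :=
  if ∃ j, j ≠ k ∧ x = -simpleRoot j then x else Q.refl k x

/-- The product `∏_{i ∈ l} σ_i` of truncated simple reflections. -/
noncomputable def tauProd (l : List ι) : (ι → ℤ) → (ι → ℤ) :=
  l.foldr (fun i f => Q.sigma i ∘ f) id

/-- `c` is "the" Fomin–Zelevinsky compatibility degree of the root subsystem
supported on `J`: it satisfies `(-α_i ‖ β) = max([β : α_i], 0)` and is invariant
under `τ_± = ∏_{i ∈ Γ^±} σ_i` for every bipartition `J = Γ⁺ ⊔ Γ⁻` into completely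
disconnected subsets. -/
def IsCompatibilityDegreeOn (J : Finset ι) (c : (ι → ℤ) → (ι → ℤ) → ℕ) : Prop :=
  (∀ i ∈ J, ∀ β ∈ Q.AlmostPositiveOn J, c (-simpleRoot i) β = (β i).toNat) ∧
  (∀ P : Finset ι, P ⊆ J →
     (∀ i ∈ P, ∀ j ∈ P, i ≠ j → Q.d i j = 0) →
     (∀ i ∈ J \ P, ∀ j ∈ J \ P, i ≠ j → Q.d i j = 0) →
     ∀ l : List ι, l.Nodup → l.toFinset = P →
       ∀ α ∈ Q.AlmostPositiveOn J, ∀ β ∈ Q.AlmostPositiveOn J,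
         c (Q.tauProd l α) (Q.tauProd l β) = c α β)

/-- The Fomin-Zelevinsky compatibility degree for the full root system `Φ(Γ)`. -/
def IsCompatibilityDegree (c : (ι → ℤ) → (ι → ℤ) → ℕ) : Prop :=
  Q.IsCompatibilityDegreeOn Finset.univ c

/-- A compatible subset of `Φ(J)_{≥ -1}`. -/
def IsCompatibleOn (J : Finset ι) (c : (ι → ℤ) → (ι → ℤ) → ℕ) (C : Set (ι → ℤ)) : Prop :=
  C ⊆ Q.AlmostPositiveOn J ∧ ∀ α ∈ C, ∀ β ∈ C, c α β = 0

/-- A cluster: a maximal compatible subset. -/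
def IsClusterOn (J : Finset ι) (c : (ι → ℤ) → (ι → ℤ) → ℕ) (C : Set (ι → ℤ)) : Prop :=
  Q.IsCompatibleOn J c C ∧ ∀ C', Q.IsCompatibleOn J c C' → C ⊆ C' → C' = C

open scoped Classical in
/-- The Tits quadratic form of the valued quiver. -/
noncomputable def tits (x : ι → ℤ) : ℤ :=
  ∑ i, (Q.eps i : ℤ) * x i ^ 2 -
    ∑ i, ∑ j, (if Q.arrow i j then (Q.d i j : ℤ) * (Q.eps j : ℤ) else 0) * x i * x j

/-- Dynkin type: the Tits form is positive definite. -/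
def IsDynkin : Prop := ∀ x : ι → ℤ, x ≠ 0 → 0 < Q.tits x

/-- Simply-laced: all valuations are symmetric and at most `1` (type `A`, `D` or `E`). -/
def IsSimplyLaced : Prop := ∀ i j, Q.d i j = Q.d j i ∧ Q.d i j ≤ 1

/-- The underlying graph of the valued quiver. -/
def graph : SimpleGraph ι := SimpleGraph.fromRel fun i j => Q.d i j ≠ 0

end ValuedQuiver

/-- The negative support `S(C) = {i : -α_i ∈ C}` of a set of almost positive roots. -/
def negSupport {ι : Type} [DecidableEq ι] (C : Set (ι → ℤ)) : Set ι :=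
  {i | -simpleRoot i ∈ C}

open CategoryTheory Limits Pretriangulated

universe u₁ v₁ u₂ v₂

/-- An object of an additive category is indecomposable if it is nonzero and admits
no nontrivial direct sum decomposition. -/
def IsIndec {C : Type u₁} [Category.{v₁} C] [Preadditive C] [HasZeroObject C]
    [HasBinaryBiproducts C] (X : C) : Prop :=
  ¬ IsZero X ∧ ∀ (Y Z : C), Nonempty (X ≅ Y ⊞ Z) → IsZero Y ∨ IsZero Z

/-- The closure of a set of objects under isomorphism. -/
def closureUnderIso {C : Type u₁} [Category.{v₁} C] (B : Set C) : Set C :=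
  {X | ∃ Y ∈ B, Nonempty (X ≅ Y)}

/-- A set `B` of objects of the cluster category is *exceptional* if
`Ext¹(X, Y) = Hom(X, Y[1]) = 0` for all `X, Y ∈ B`. -/
def IsExceptionalSet {C : Type u₁} [Category.{v₁} C] [Preadditive C] [HasShift C ℤ]
    (B : Set C) : Prop :=
  ∀ X ∈ B, ∀ Y ∈ B, ∀ f : X ⟶ Y⟦(1 : ℤ)⟧, f = 0

/-- A *tilting set*: an exceptional set of indecomposable objects which is maximal
(up to isomorphism) among such. -/
def IsTiltingSet {C : Type u₁} [Category.{v₁} C] [Preadditive C] [HasShift C ℤ]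
    [HasZeroObject C] [HasBinaryBiproducts C] (B : Set C) : Prop :=
  (∀ X ∈ B, IsIndec X) ∧ IsExceptionalSet B ∧
    ∀ B' : Set C, (∀ X ∈ B', IsIndec X) → IsExceptionalSet B' → B ⊆ B' →
      B' ⊆ closureUnderIso B


namespace BGPAux

open CategoryTheory Limits

universe w₁ x₁ w₂ x₂

variable {C : Type w₁} [Category.{x₁} C] {D : Type w₂} [Category.{x₂} D]

lemma subset_closure (B : Set C) : B ⊆ closureUnderIso B :=
  fun X hX => ⟨X, hX, ⟨Iso.refl X⟩⟩

lemma closure_idem (B : Set C) :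
    closureUnderIso (closureUnderIso B) = closureUnderIso B := by
  refine Set.Subset.antisymm ?_ (subset_closure _)
  rintro X ⟨Y, ⟨Z, hZ, ⟨e2⟩⟩, ⟨e1⟩⟩
  exact ⟨Z, hZ, ⟨e1 ≪≫ e2⟩⟩

section Preadd

variable [Preadditive C] [Preadditive D]

lemma isZero_map_iff (F : C ⥤ D) [F.Additive] [F.Faithful] (X : C) :
    IsZero (F.obj X) ↔ IsZero X := by
  rw [IsZero.iff_id_eq_zero, IsZero.iff_id_eq_zero]
  constructor
  · intro h
    apply F.map_injective
    rw [F.map_id, F.map_zero, h]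
  · intro h
    rw [← F.map_id, h, F.map_zero]

variable [HasZeroObject C] [HasBinaryBiproducts C]
  [HasZeroObject D] [HasBinaryBiproducts D]

lemma isIndec_of_iso {X Y : C} (e : X ≅ Y) (h : IsIndec Y) : IsIndec X :=
  ⟨fun hz => h.1 (hz.of_iso e.symm), fun Y' Z' ⟨e'⟩ => h.2 Y' Z' ⟨e.symm ≪≫ e'⟩⟩

lemma isIndec_map_iff (F : C ⥤ D) [F.IsEquivalence] (X : C) :
    IsIndec (F.obj X) ↔ IsIndec X := by
  haveI : PreservesBinaryBiproducts F :=
    preservesBinaryBiproducts_of_preservesBinaryProducts F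
  haveI : F.Additive := Functor.additive_of_preservesBinaryBiproducts F
  let E := F.asEquivalence
  haveI : E.functor.Additive := inferInstanceAs F.Additive
  haveI : E.inverse.Additive := inferInstance
  haveI : PreservesBinaryBiproducts E.inverse :=
    preservesBinaryBiproducts_of_preservesBinaryProducts E.inverse
  constructor
  · rintro ⟨h1, h2⟩
    refine ⟨fun hz => h1 ((isZero_map_iff F X).mpr hz), ?_⟩
    rintro Y Z ⟨e⟩
    have e' : F.obj X ≅ F.obj Y ⊞ F.obj Z := F.mapIso e ≪≫ F.mapBiprod Y Z
    rcases h2 _ _ ⟨e'⟩ with h | h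
    · exact Or.inl ((isZero_map_iff F Y).mp h)
    · exact Or.inr ((isZero_map_iff F Z).mp h)
  · rintro ⟨h1, h2⟩
    refine ⟨fun hz => h1 ((isZero_map_iff F X).mp hz), ?_⟩
    rintro Y Z ⟨e⟩
    have e' : X ≅ E.inverse.obj Y ⊞ E.inverse.obj Z :=
      E.unitIso.app X ≪≫ E.inverse.mapIso e ≪≫ E.inverse.mapBiprod Y Z
    rcases h2 _ _ ⟨e'⟩ with h | h
    · exact Or.inl (((isZero_map_iff F _).mpr h).of_iso (E.counitIso.symm.app Y))
    · exact Or.inr (((isZero_map_iff F _).mpr h).of_iso (E.counitIso.symm.app Z))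

end Preadd

section Shift

variable [Preadditive C] [Preadditive D] [HasShift C ℤ] [HasShift D ℤ]

lemma exceptional_subset {A B : Set C} (h : A ⊆ B) (hB : IsExceptionalSet B) :
    IsExceptionalSet A :=
  fun X hX Y hY f => hB X (h hX) Y (h hY) f

lemma exceptional_closure {B : Set C} (hB : IsExceptionalSet B) :
    IsExceptionalSet (closureUnderIso B) := by
  rintro X ⟨X₀, hX₀, ⟨eX⟩⟩ Y ⟨Y₀, hY₀, ⟨eY⟩⟩ f
  have h : eX.inv ≫ f ≫ (shiftFunctor C (1 : ℤ)).map eY.hom = 0 := hB _ hX₀ _ hY₀ _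
  have : f = eX.hom ≫ (eX.inv ≫ f ≫ (shiftFunctor C (1 : ℤ)).map eY.hom) ≫
      (shiftFunctor C (1 : ℤ)).map eY.inv := by
    simp [← Functor.map_comp]
  rw [this, h, Limits.zero_comp, Limits.comp_zero]

lemma exceptional_image_iff (F : C ⥤ D) [F.IsEquivalence] [F.CommShift ℤ]
    [F.Additive] (B : Set C) :
    IsExceptionalSet (F.obj '' B) ↔ IsExceptionalSet B := by
  constructor
  · intro h X hX Y hY f
    have h0 : F.map f ≫ (F.commShiftIso (1 : ℤ)).hom.app Y = 0 :=
      h _ ⟨X, hX, rfl⟩ _ ⟨Y, hY, rfl⟩ _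
    apply F.map_injective
    rw [F.map_zero]
    calc F.map f = (F.map f ≫ (F.commShiftIso (1 : ℤ)).hom.app Y) ≫
        (F.commShiftIso (1 : ℤ)).inv.app Y := by simp
      _ = 0 := by rw [h0, Limits.zero_comp]
  · rintro h X' ⟨X, hX, rfl⟩ Y' ⟨Y, hY, rfl⟩ f
    set g : F.obj X ⟶ F.obj (Y⟦(1 : ℤ)⟧) := f ≫ (F.commShiftIso (1 : ℤ)).inv.app Y with hg
    have hp : F.preimage g = 0 := h X hX Y hY _
    have hg0 : g = 0 := by rw [← F.map_preimage g, hp, F.map_zero]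
    calc f = g ≫ (F.commShiftIso (1 : ℤ)).hom.app Y := by simp [hg]
      _ = 0 := by rw [hg0, Limits.zero_comp]

end Shift

end BGPAux

/-- **Proposition 3.2, first part.** Let `k` be a sink (or a source)
of a valued quiver `(M, Γ, Ω)` of any type.  The BGP reflection functor
`R(S⁺_k) : C(Ω) ⥤ C(s_kΩ)` (resp. `R(S⁻_k)`) gives a one-to-one correspondence
between the exceptional sets in `ind C(Ω)` and the exceptional sets in
`ind C(s_kΩ)` (here realized on iso-closed sets of indecomposables, i.e. on sets of
isomorphism classes), and under this correspondence tilting sets go to tilting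
sets. -/

theorem bgp_reflection_bijection_on_exceptional_sets
    {ι : Type} [Fintype ι] [DecidableEq ι]
    (Q Q' : ValuedQuiver ι) (k : ι)
    (hk : Q.IsSink k ∨ Q.IsSource k)
    (hrefl : Q.IsReflectionAt Q' k)
    -- the cluster categories `C(Ω)` and `C(s_kΩ)`
    {CC : Type u₁} [Category.{v₁} CC] [HasZeroObject CC] [HasShift CC ℤ]
    [Preadditive CC] [∀ n : ℤ, (shiftFunctor CC n).Additive] [Pretriangulated CC]
    [HasBinaryBiproducts CC]
    {CC' : Type u₂} [Category.{v₂} CC'] [HasZeroObject CC'] [HasShift CC' ℤ]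
    [Preadditive CC'] [∀ n : ℤ, (shiftFunctor CC' n).Additive] [Pretriangulated CC']
    [HasBinaryBiproducts CC']
    -- the BGP reflection functor `R(S⁺_k)` (resp. `R(S⁻_k)`), a triangle equivalence
    (R : CC ⥤ CC') [R.IsEquivalence] (cR : R.CommShift ℤ) :
    Set.BijOn (fun B : Set CC => closureUnderIso (R.obj '' B))
      {B : Set CC | closureUnderIso B = B ∧ (∀ X ∈ B, IsIndec X) ∧ IsExceptionalSet B}
      {B' : Set CC' | closureUnderIso B' = B' ∧ (∀ X ∈ B', IsIndec X) ∧
        IsExceptionalSet B'} ∧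
    ∀ B : Set CC, IsTiltingSet B → IsTiltingSet (closureUnderIso (R.obj '' B)) := by
  classical
  letI := cR
  haveI : PreservesBinaryBiproducts R :=
    preservesBinaryBiproducts_of_preservesBinaryProducts R
  haveI hRadd : R.Additive := Functor.additive_of_preservesBinaryBiproducts R
  set E := R.asEquivalence with hE
  haveI : E.functor.Additive := inferInstanceAs R.Additive
  haveI hGadd : E.inverse.Additive := inferInstance
  set G := E.inverse with hG
  open BGPAux in
  -- basic transfers
  have hindG : ∀ (X' : CC'), IsIndec X' → IsIndec (G.obj X') := by
    intro X' h
    have : IsIndec (R.obj (G.obj X')) := isIndec_of_iso (E.counitIso.app X') h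
    exact (isIndec_map_iff R _).mp this
  -- image of an indecomposable-closure
  have hindImage : ∀ (B : Set CC), (∀ X ∈ B, IsIndec X) →
      ∀ X ∈ closureUnderIso (R.obj '' B), IsIndec X := by
    rintro B hB X ⟨X₀, ⟨Y, hY, rfl⟩, ⟨e⟩⟩
    exact isIndec_of_iso e ((isIndec_map_iff R Y).mpr (hB Y hY))
  have hexcImage : ∀ (B : Set CC), IsExceptionalSet B →
      IsExceptionalSet (closureUnderIso (R.obj '' B)) := by
    intro B hB
    exact exceptional_closure ((exceptional_image_iff R B).mpr hB)
  -- key injectivity step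
  have key : ∀ B₁ B₂ : Set CC, closureUnderIso B₂ = B₂ →
      closureUnderIso (R.obj '' B₁) = closureUnderIso (R.obj '' B₂) → B₁ ⊆ B₂ := by
    intro B₁ B₂ h₂ heq X hX
    have hmem : R.obj X ∈ closureUnderIso (R.obj '' B₂) := by
      rw [← heq]
      exact subset_closure _ ⟨X, hX, rfl⟩
    obtain ⟨X₀, ⟨Y, hY, rfl⟩, ⟨e⟩⟩ := hmem
    have : X ∈ closureUnderIso B₂ := ⟨Y, hY, ⟨R.preimageIso e⟩⟩
    rwa [h₂] at this
  constructor
  · refine ⟨?_, ?_, ?_⟩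
    · rintro B ⟨hcl, hind, hexc⟩
      exact ⟨closure_idem _, hindImage B hind, hexcImage B hexc⟩
    · rintro B₁ ⟨h₁, _, _⟩ B₂ ⟨h₂, _, _⟩ heq
      exact Set.Subset.antisymm (key B₁ B₂ h₂ heq) (key B₂ B₁ h₁ heq.symm)
    · rintro B' ⟨hcl', hind', hexc'⟩
      refine ⟨closureUnderIso (G.obj '' B'), ⟨closure_idem _, ?_, ?_⟩, ?_⟩
      · rintro X ⟨X₀, ⟨Y', hY', rfl⟩, ⟨e⟩⟩
        exact isIndec_of_iso e (hindG Y' (hind' Y' hY'))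
      · -- exceptional
        have hsubs : R.obj '' (G.obj '' B') ⊆ closureUnderIso B' := by
          rintro X ⟨X₀, ⟨Y', hY', rfl⟩, rfl⟩
          exact ⟨Y', hY', ⟨E.counitIso.app Y'⟩⟩
        have : IsExceptionalSet (R.obj '' (G.obj '' B')) :=
          exceptional_subset hsubs (exceptional_closure hexc')
        exact exceptional_closure ((exceptional_image_iff R _).mp this)
      · -- image is B'
        show closureUnderIso (R.obj '' closureUnderIso (G.obj '' B')) = B'
        apply Set.Subset.antisymm
        · rintro X ⟨X₀, ⟨Y, ⟨Y₀, ⟨Z', hZ', rfl⟩, ⟨e₂⟩⟩, rfl⟩, ⟨e₁⟩⟩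
          have : X ∈ closureUnderIso B' :=
            ⟨Z', hZ', ⟨e₁ ≪≫ R.mapIso e₂ ≪≫ E.counitIso.app Z'⟩⟩
          rwa [hcl'] at this
        · intro X' hX'
          refine ⟨R.obj (G.obj X'), ⟨G.obj X', subset_closure _ ⟨X', hX', rfl⟩, rfl⟩,
            ⟨(E.counitIso.app X').symm⟩⟩
  · rintro B ⟨hind, hexc, hmax⟩
    refine ⟨hindImage B hind, hexcImage B hexc, ?_⟩
    intro B'' hind'' hexc'' hsub
    set D := closureUnderIso (G.obj '' B'') with hD
    have hDind : ∀ X ∈ D, IsIndec X := by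
      rintro X ⟨X₀, ⟨Y', hY', rfl⟩, ⟨e⟩⟩
      exact isIndec_of_iso e (hindG Y' (hind'' Y' hY'))
    have hDexc : IsExceptionalSet D := by
      have hsubs : R.obj '' (G.obj '' B'') ⊆ closureUnderIso B'' := by
        rintro X ⟨X₀, ⟨Y', hY', rfl⟩, rfl⟩
        exact ⟨Y', hY', ⟨E.counitIso.app Y'⟩⟩
      have : IsExceptionalSet (R.obj '' (G.obj '' B'')) :=
        exceptional_subset hsubs (exceptional_closure hexc'')
      exact exceptional_closure ((exceptional_image_iff R _).mp this)
    have hBD : B ⊆ D := by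
      intro X hX
      have h1 : R.obj X ∈ B'' := hsub (subset_closure _ ⟨X, hX, rfl⟩)
      exact ⟨G.obj (R.obj X), ⟨R.obj X, h1, rfl⟩, ⟨E.unitIso.app X⟩⟩
    have hDB : D ⊆ closureUnderIso B := hmax D hDind hDexc hBD
    rw [closure_idem]
    intro X' hX'
    have h1 : G.obj X' ∈ closureUnderIso B := hDB (subset_closure _ ⟨X', hX', rfl⟩)
    obtain ⟨Y, hY, ⟨e⟩⟩ := h1
    exact ⟨R.obj Y, ⟨Y, hY, rfl⟩, ⟨(E.counitIso.app X').symm ≪≫ R.mapIso e⟩⟩
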